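/- Define P(t) = Ψ(t)²/Z where Ψ solves dΨ/dt = 2K(1/Ψ − mΨ/Z) with Ψ(0) = Ψ_0 > 0, K, Z > 0. Then P(t) = 1/m − (1/m − P(0)) exp(−4mKt/Z), and P(t) → 1/m as t → ∞. -/

import Mathlib

/-! Differentiating the ODE shows that `P = Ψ² / Z` satisfies the linear relaxation equation
`P' = (4mK/Z) (1/m − P)`, whose solutions decay exponentially to the equilibrium `1/m`:
`(P − 1/m) · exp(4mKt/Z)` has zero derivative. -/

open Real Filter Topology

theorem eq_sub_mul_exp_of_hasDerivAt_relaxation {f : ℝ → ℝ} {a c : ℝ}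
    (hf : ∀ t, 0 ≤ t → HasDerivAt f (a * (c - f t)) t) {t : ℝ} (ht : 0 ≤ t) :
    f t = c - (c - f 0) * exp (-(a * t)) := by
  set g : ℝ → ℝ := fun s => (f s - c) * exp (a * s)
  have hg : ∀ s, 0 ≤ s → HasDerivAt g 0 s := by
    intro s hs
    have hexp : HasDerivAt (fun s => exp (a * s)) (exp (a * s) * a) s :=
      ((hasDerivAt_id s).const_mul a).exp.congr_deriv (by simp)
    exact (((hf s hs).sub_const c).fun_mul hexp).congr_deriv (by ring)
  have hconst : g t = g 0 :=
    constant_of_has_deriv_right_zero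
      (fun x hx => (hg x hx.1).continuousAt.continuousWithinAt)
      (fun x hx => (hg x hx.1).hasDerivWithinAt) t (Set.right_mem_Icc.mpr ht)
  have hdecay : f t - c = (f 0 - c) * exp (-(a * t)) := by
    simpa [g, exp_neg, eq_mul_inv_iff_mul_eq₀ (exp_ne_zero _)] using hconst
  linarith

theorem tendsto_sub_mul_exp_neg_atTop {a : ℝ} (ha : 0 < a) (b c : ℝ) :
    Tendsto (fun t => c - b * exp (-(a * t))) atTop (𝓝 c) := by
  have hexp : Tendsto (fun t => exp (-(a * t))) atTop (𝓝 0) :=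
    tendsto_exp_neg_atTop_nhds_zero.comp (tendsto_id.const_mul_atTop ha)
  simpa using (hexp.const_mul b).const_sub c

theorem hasDerivAt_sq_div_of_born_ode {Ψ : ℝ → ℝ} {K Z m t : ℝ} (hZ : Z ≠ 0) (hm : m ≠ 0)
    (hΨ : Ψ t ≠ 0) (hode : HasDerivAt Ψ (2 * K * (1 / Ψ t - m * Ψ t / Z)) t) :
    HasDerivAt (fun s => Ψ s ^ 2 / Z) (4 * m * K / Z * (1 / m - Ψ t ^ 2 / Z)) t := by
  refine ((hode.fun_pow 2).div_const Z).congr_deriv ?_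
  field_simp
  ring

theorem stmt14_general (K Z : ℝ) (hK : 0 < K) (hZ : 0 < Z) (m : ℕ) (hm : 0 < m)
    (Ψ : ℝ → ℝ)
    (hpos : ∀ t : ℝ, 0 ≤ t → 0 < Ψ t)
    (hode : ∀ t : ℝ, 0 ≤ t →
      HasDerivAt Ψ (2 * K * (1 / Ψ t - m * Ψ t / Z)) t)
    (P : ℝ → ℝ) (hP : P = fun t => Ψ t ^ 2 / Z) :
    (∀ t : ℝ, 0 ≤ t →
        P t = 1 / m - (1 / m - P 0) * Real.exp (-(4 * m * K * t / Z))) ∧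
      Filter.Tendsto P Filter.atTop (nhds (1 / m)) := by
  have hm' : (0 : ℝ) < m := Nat.cast_pos.mpr hm
  have hrate : 0 < 4 * m * K / Z := by positivity
  have hrelax : ∀ t, 0 ≤ t → HasDerivAt P (4 * m * K / Z * (1 / m - P t)) t := fun t ht => by
    subst hP
    exact hasDerivAt_sq_div_of_born_ode hZ.ne' hm'.ne' (hpos t ht).ne' (hode t ht)
  have hexponent : ∀ t : ℝ, 4 * m * K * t / Z = 4 * m * K / Z * t := fun t => by ring
  have hsol : ∀ t, 0 ≤ t → P t = 1 / m - (1 / m - P 0) * exp (-(4 * m * K * t / Z)) :=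
    fun t ht => hexponent t ▸ eq_sub_mul_exp_of_hasDerivAt_relaxation hrelax ht
  refine ⟨hsol, ?_⟩
  refine (tendsto_sub_mul_exp_neg_atTop hrate (1 / m - P 0) (1 / m)).congr' ?_
  filter_upwards [eventually_ge_atTop 0] with t ht
  rw [hsol t ht, hexponent]

/-- For `P(t) = Ψ(t)²/Z` with `Ψ` a positive solution of the Born machine
ODE `dΨ/dt = 2K(1/Ψ − mΨ/Z)`, we have
`P(t) = 1/m − (1/m − P(0)) exp(−4mKt/Z)` and `P(t) → 1/m` as `t → ∞`. -/
theorem stmt14 (K Z : ℝ) (hK : 0 < K) (hZ : 0 < Z) (m : ℕ) (hm : 0 < m)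
    (Ψ₀ : ℝ) (hΨ₀ : 0 < Ψ₀) (Ψ : ℝ → ℝ) (h0 : Ψ 0 = Ψ₀)
    (hpos : ∀ t : ℝ, 0 ≤ t → 0 < Ψ t)
    (hode : ∀ t : ℝ, 0 ≤ t →
      HasDerivAt Ψ (2 * K * (1 / Ψ t - m * Ψ t / Z)) t)
    (P : ℝ → ℝ) (hP : P = fun t => Ψ t ^ 2 / Z) :
    (∀ t : ℝ, 0 ≤ t →
        P t = 1 / m - (1 / m - P 0) * Real.exp (-(4 * m * K * t / Z))) ∧
      Filter.Tendsto P Filter.atTop (nhds (1 / m)) :=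
  stmt14_general K Z hK hZ m hm Ψ hpos hode P hP
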